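/- arXiv:2107.06654 — 2 statements merged into one kernel-verified Lean document; each statement's English description precedes it below -/
import Mathlib

section
/- Given a Q-excessive measure ν with Q nonnegative, G finite, and a finite set B ⊂ S, the measure μ on S satisfying ν(y) = 1_{B^c}(y) μ(y)/h(y) + Σ_{z∈B} μ(z) G(z,y) for all y ∈ S is unique: its restriction to B is forced to be μ|_B = ν|_B (I − Q^B), where Q^B is the first-return kernel to B, and its values on B^c are then determined by the displayed relation. -/
open scoped ENNReal

/-- Entrywise matrix powers of a nonnegative kernel `Q` on a countable set `S`. -/
noncomputable def qpow {S : Type*} [DecidableEq S] (Q : S → S → ℝ≥0∞) : ℕ → S → S → ℝ≥0∞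
  | 0 => fun x y => if x = y then 1 else 0
  | n + 1 => fun x y => ∑' z, Q x z * qpow Q n z y

/-- Green's function `G = Σ_{n ≥ 0} Q^n` (entrywise, in `ℝ≥0∞`). -/
noncomputable def green {S : Type*} [DecidableEq S] (Q : S → S → ℝ≥0∞) (x y : S) : ℝ≥0∞ :=
  ∑' n, qpow Q n x y

/-- The first-return kernel `Q^B` to a finite set `B`. -/
noncomputable def retKer {S : Type*} [DecidableEq S] (Q : S → S → ℝ≥0∞) (B : Finset S)
    (x y : S) : ℝ≥0∞ :=
  if x ∈ B ∧ y ∈ B then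
    ∑' (m : ℕ), ∑' z, Q x z * qpow (fun u v => if u ∈ B then 0 else Q u v) m z y
  else 0

section Aux

variable {S : Type*} [DecidableEq S]

/-- The kernel `Q` killed on `B` (rows from `B` are zeroed). -/
noncomputable def pker (Q : S → S → ℝ≥0∞) (B : Finset S) : S → S → ℝ≥0∞ :=
  fun u v => if u ∈ B then 0 else Q u v

/-- `D_m(z,x) = 1_B(z) (Q P^m)(z,x)` where `P = pker Q B`. -/
noncomputable def dker (Q : S → S → ℝ≥0∞) (B : Finset S) (m : ℕ) (z x : S) : ℝ≥0∞ :=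
  if z ∈ B then ∑' u, Q z u * qpow (pker Q B) m u x else 0

lemma qpow_succ' (Q : S → S → ℝ≥0∞) (n : ℕ) (x y : S) :
    qpow Q (n + 1) x y = ∑' z, qpow Q n x z * Q z y := by
  induction n generalizing x y with
  | zero =>
    show ∑' z, Q x z * qpow Q 0 z y = ∑' z, qpow Q 0 x z * Q z y
    simp only [qpow]
    rw [tsum_eq_single y (by intro b hb; simp [hb]),
      tsum_eq_single x (by intro b hb; simp [Ne.symm hb])]
    simp
  | succ n ih =>
    calc qpow Q (n + 2) x y = ∑' z, Q x z * qpow Q (n + 1) z y := rfl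
      _ = ∑' z, Q x z * ∑' u, qpow Q n z u * Q u y := by
          exact tsum_congr fun z => by rw [ih]
      _ = ∑' z, ∑' u, Q x z * (qpow Q n z u * Q u y) := by
          exact tsum_congr fun z => ENNReal.tsum_mul_left.symm
      _ = ∑' u, ∑' z, Q x z * (qpow Q n z u * Q u y) := ENNReal.tsum_comm
      _ = ∑' u, (∑' z, Q x z * qpow Q n z u) * Q u y := by
          refine tsum_congr fun u => ?_
          simp_rw [← mul_assoc]
          exact ENNReal.tsum_mul_right
      _ = ∑' u, qpow Q (n + 1) x u * Q u y := rfl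

lemma pker_qpow_mem {Q : S → S → ℝ≥0∞} {B : Finset S} {w : S} (hw : w ∈ B) (n : ℕ) (x : S) :
    qpow (pker Q B) (n + 1) w x = 0 := by
  show ∑' z, pker Q B w z * qpow (pker Q B) n z x = 0
  simp [pker, hw]

lemma dker_zero (Q : S → S → ℝ≥0∞) (B : Finset S) (z x : S) :
    dker Q B 0 z x = if z ∈ B then Q z x else 0 := by
  by_cases hz : z ∈ B
  · simp only [dker, hz, if_true, qpow]
    rw [tsum_eq_single x (by intro b hb; simp [hb])]
    simp
  · simp [dker, hz]

lemma dker_step (Q : S → S → ℝ≥0∞) (B : Finset S) (m : ℕ) (u x : S) :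
    ∑' z, dker Q B m u z * pker Q B z x = dker Q B (m + 1) u x := by
  by_cases hu : u ∈ B
  · simp only [dker, hu, if_true]
    calc ∑' z, (∑' v, Q u v * qpow (pker Q B) m v z) * pker Q B z x
        = ∑' z, ∑' v, Q u v * qpow (pker Q B) m v z * pker Q B z x := by
          exact tsum_congr fun z => ENNReal.tsum_mul_right.symm
      _ = ∑' v, ∑' z, Q u v * qpow (pker Q B) m v z * pker Q B z x := ENNReal.tsum_comm
      _ = ∑' v, Q u v * ∑' z, qpow (pker Q B) m v z * pker Q B z x := by
          refine tsum_congr fun v => ?_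
          simp_rw [mul_assoc]
          exact ENNReal.tsum_mul_left
      _ = ∑' v, Q u v * qpow (pker Q B) (m + 1) v x := by
          exact tsum_congr fun v => by rw [← qpow_succ']
  · simp [dker, hu]

lemma dker_push (Q : S → S → ℝ≥0∞) (B : Finset S) (m : ℕ) (x : S) (a : S → ℝ≥0∞) :
    ∑' z, (∑' u, a u * dker Q B m u z) * pker Q B z x
      = ∑' u, a u * dker Q B (m + 1) u x := by
  calc ∑' z, (∑' u, a u * dker Q B m u z) * pker Q B z x
      = ∑' z, ∑' u, a u * dker Q B m u z * pker Q B z x := by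
        exact tsum_congr fun z => ENNReal.tsum_mul_right.symm
    _ = ∑' u, ∑' z, a u * dker Q B m u z * pker Q B z x := ENNReal.tsum_comm
    _ = ∑' u, a u * ∑' z, dker Q B m u z * pker Q B z x := by
        refine tsum_congr fun u => ?_
        simp_rw [mul_assoc]
        exact ENNReal.tsum_mul_left
    _ = ∑' u, a u * dker Q B (m + 1) u x := by
        exact tsum_congr fun u => by rw [dker_step]

lemma qpow_decomp (Q : S → S → ℝ≥0∞) (B : Finset S) :
    ∀ (n : ℕ) (w x : S), qpow Q n w x = qpow (pker Q B) n w x +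
      ∑ k ∈ Finset.range n, ∑' z, qpow Q k w z * dker Q B (n - 1 - k) z x := by
  intro n
  induction n with
  | zero => intro w x; simp [qpow]
  | succ n ih =>
    intro w x
    have hsplit : ∀ z, Q z x = pker Q B z x + (if z ∈ B then Q z x else 0) := by
      intro z; by_cases hz : z ∈ B <;> simp [pker, hz]
    calc qpow Q (n + 1) w x = ∑' z, qpow Q n w z * Q z x := qpow_succ' Q n w x
      _ = ∑' z, (qpow Q n w z * pker Q B z x + qpow Q n w z * dker Q B 0 z x) := by
          refine tsum_congr fun z => ?_
          rw [dker_zero, ← mul_add, ← hsplit]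
      _ = (∑' z, qpow Q n w z * pker Q B z x) + ∑' z, qpow Q n w z * dker Q B 0 z x :=
          ENNReal.tsum_add
      _ = (∑' z, (qpow (pker Q B) n w z +
            ∑ k ∈ Finset.range n, ∑' u, qpow Q k w u * dker Q B (n - 1 - k) u z)
              * pker Q B z x) + ∑' z, qpow Q n w z * dker Q B 0 z x := by
          congr 1
          exact tsum_congr fun z => by rw [← ih w z]
      _ = ((∑' z, qpow (pker Q B) n w z * pker Q B z x) +
            ∑' z, (∑ k ∈ Finset.range n, ∑' u, qpow Q k w u * dker Q B (n - 1 - k) u z)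
              * pker Q B z x) + ∑' z, qpow Q n w z * dker Q B 0 z x := by
          congr 1
          simp_rw [add_mul]
          exact ENNReal.tsum_add
      _ = (qpow (pker Q B) (n + 1) w x +
            ∑ k ∈ Finset.range n, ∑' u, qpow Q k w u * dker Q B (n - 1 - k + 1) u x) +
            ∑' z, qpow Q n w z * dker Q B 0 z x := by
          congr 1
          congr 1
          · exact (qpow_succ' (pker Q B) n w x).symm
          · calc ∑' z, (∑ k ∈ Finset.range n, ∑' u, qpow Q k w u * dker Q B (n - 1 - k) u z)
                  * pker Q B z x
                = ∑' z, ∑ k ∈ Finset.range n,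
                    (∑' u, qpow Q k w u * dker Q B (n - 1 - k) u z) * pker Q B z x := by
                  exact tsum_congr fun z => Finset.sum_mul ..
              _ = ∑ k ∈ Finset.range n, ∑' z,
                    (∑' u, qpow Q k w u * dker Q B (n - 1 - k) u z) * pker Q B z x :=
                  Summable.tsum_finsetSum fun i _ => ENNReal.summable
              _ = ∑ k ∈ Finset.range n, ∑' u, qpow Q k w u * dker Q B (n - 1 - k + 1) u x :=
                  Finset.sum_congr rfl fun k _ => dker_push ..
      _ = qpow (pker Q B) (n + 1) w x +
            ∑ k ∈ Finset.range (n + 1), ∑' z, qpow Q k w z * dker Q B (n + 1 - 1 - k) z x := by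
          rw [add_assoc]
          congr 1
          rw [Finset.sum_range_succ]
          congr 1
          · refine Finset.sum_congr rfl fun k hk => ?_
            have hkn := Finset.mem_range.mp hk
            have hnk : n - 1 - k + 1 = n + 1 - 1 - k := by omega
            rw [hnk]
          · have hnk : n + 1 - 1 - n = 0 := by omega
            rw [hnk]

lemma tsum_range_diag (f : ℕ → ℕ → ℝ≥0∞) :
    ∑' n, ∑ k ∈ Finset.range n, f k (n - 1 - k) = ∑' k, ∑' m, f k m := by
  calc ∑' n, ∑ k ∈ Finset.range n, f k (n - 1 - k)
      = ∑' n, ∑' k, if k < n then f k (n - 1 - k) else 0 := by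
        refine tsum_congr fun n => ?_
        rw [tsum_eq_sum (s := Finset.range n)
          (fun k hk => by rw [if_neg (by simpa using hk)])]
        exact Finset.sum_congr rfl fun k hk => by rw [if_pos (Finset.mem_range.mp hk)]
    _ = ∑' k, ∑' n, if k < n then f k (n - 1 - k) else 0 := ENNReal.tsum_comm
    _ = ∑' k, ∑' m, f k m := by
        refine tsum_congr fun k => ?_
        have hinj : Function.Injective (fun m : ℕ => m + (k + 1)) := fun a b hab => by
          simpa using hab
        rw [← Function.Injective.tsum_eq hinj
          (f := fun n => if k < n then f k (n - 1 - k) else 0) ?_]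
        · refine tsum_congr fun m => ?_
          show (if k < m + (k + 1) then f k (m + (k + 1) - 1 - k) else 0) = f k m
          rw [if_pos (by omega)]
          congr 1
          omega
        · intro n hn
          rw [Function.mem_support] at hn
          have hkn : k < n := by
            by_contra hc
            exact hn (if_neg hc)
          exact ⟨n - (k + 1), by show n - (k + 1) + (k + 1) = n; omega⟩

lemma green_eq (Q : S → S → ℝ≥0∞) (B : Finset S) {w x : S} (hw : w ∈ B) (hx : x ∈ B) :
    green Q w x = (if w = x then 1 else 0) + ∑ z ∈ B, green Q w z * retKer Q B z x := by
  have h0 : ∑' n, qpow (pker Q B) n w x = if w = x then 1 else 0 := by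
    rw [tsum_eq_single 0 ?_]
    · simp [qpow]
    · intro n hn
      obtain ⟨m, rfl⟩ := Nat.exists_eq_succ_of_ne_zero hn
      exact pker_qpow_mem hw m x
  calc green Q w x = ∑' n, qpow Q n w x := rfl
    _ = ∑' n, (qpow (pker Q B) n w x +
          ∑ k ∈ Finset.range n, ∑' z, qpow Q k w z * dker Q B (n - 1 - k) z x) :=
        tsum_congr fun n => qpow_decomp Q B n w x
    _ = (∑' n, qpow (pker Q B) n w x) +
          ∑' n, ∑ k ∈ Finset.range n, ∑' z, qpow Q k w z * dker Q B (n - 1 - k) z x :=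
        ENNReal.tsum_add
    _ = (if w = x then 1 else 0) +
          ∑' k, ∑' m, ∑' z, qpow Q k w z * dker Q B m z x := by
        rw [h0, tsum_range_diag (fun k m => ∑' z, qpow Q k w z * dker Q B m z x)]
    _ = (if w = x then 1 else 0) + ∑ z ∈ B, green Q w z * retKer Q B z x := by
        congr 1
        calc ∑' k, ∑' m, ∑' z, qpow Q k w z * dker Q B m z x
            = ∑' k, ∑' z, ∑' m, qpow Q k w z * dker Q B m z x :=
              tsum_congr fun k => ENNReal.tsum_comm
          _ = ∑' z, ∑' k, ∑' m, qpow Q k w z * dker Q B m z x := ENNReal.tsum_comm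
          _ = ∑' z, green Q w z * retKer Q B z x := by
              refine tsum_congr fun z => ?_
              have h1 : ∑' k, ∑' m, qpow Q k w z * dker Q B m z x
                  = (∑' k, qpow Q k w z) * ∑' m, dker Q B m z x := by
                rw [← ENNReal.tsum_mul_right]
                exact tsum_congr fun k => ENNReal.tsum_mul_left
              rw [h1]
              congr 1
              by_cases hz : z ∈ B
              · simp only [dker, retKer, pker, hz, hx, and_self, if_true]
                rfl
              · simp [dker, retKer, hz]
          _ = ∑ z ∈ B, green Q w z * retKer Q B z x := by
              rw [tsum_eq_sum (s := B) (fun z hz => by simp [retKer, hz])]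

end Aux

/-- the measure `μ` with
`ν(y) = 1_{B^c}(y) μ(y)/h(y) + Σ_{z∈B} μ(z) G(z,y)` is unique, and on `B` it is forced
to be `μ|_B = ν|_B (I − Q^B)`, i.e. `μ(x) + Σ_{z∈B} ν(z) Q^B(z,x) = ν(x)` for `x ∈ B`. -/
theorem representation_unique {S : Type*} [Countable S] [DecidableEq S]
    (Q : S → S → ℝ≥0∞) (hG : ∀ x y, green Q x y < ⊤) (B : Finset S)
    (h : S → ℝ≥0∞) (hh0 : ∀ x, 0 < h x) (hhfin : ∀ x, h x < ⊤)
    (hB : ∀ x ∈ B, h x = 1)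
    (ν : S → ℝ≥0∞) (hνfin : ∀ x, ν x < ⊤) :
    (∀ μ₁ μ₂ : S → ℝ≥0∞, (∀ x, μ₁ x < ⊤) → (∀ x, μ₂ x < ⊤) →
      (∀ y, ν y = (if y ∈ B then 0 else μ₁ y / h y) +
        ∑' z, (if z ∈ B then μ₁ z * green Q z y else 0)) →
      (∀ y, ν y = (if y ∈ B then 0 else μ₂ y / h y) +
        ∑' z, (if z ∈ B then μ₂ z * green Q z y else 0)) →
      μ₁ = μ₂) ∧
    (∀ μ : S → ℝ≥0∞, (∀ x, μ x < ⊤) →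
      (∀ y, ν y = (if y ∈ B then 0 else μ y / h y) +
        ∑' z, (if z ∈ B then μ z * green Q z y else 0)) →
      ∀ x ∈ B, μ x + ∑ z ∈ B, ν z * retKer Q B z x = ν x) := by
  have key2 : ∀ μ : S → ℝ≥0∞, (∀ x, μ x < ⊤) →
      (∀ y, ν y = (if y ∈ B then 0 else μ y / h y) +
        ∑' z, (if z ∈ B then μ z * green Q z y else 0)) →
      ∀ x ∈ B, μ x + ∑ z ∈ B, ν z * retKer Q B z x = ν x := by
    intro μ hμfin hrep x hx
    have hrepB : ∀ y ∈ B, ν y = ∑ z ∈ B, μ z * green Q z y := by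
      intro y hy
      rw [hrep y, if_pos hy, zero_add, tsum_eq_sum (s := B) (fun z hz => by simp [hz])]
      exact Finset.sum_congr rfl fun z hz => by rw [if_pos hz]
    rw [hrepB x hx]
    calc μ x + ∑ z ∈ B, ν z * retKer Q B z x
        = μ x + ∑ z ∈ B, (∑ w ∈ B, μ w * green Q w z) * retKer Q B z x := by
          congr 1
          exact Finset.sum_congr rfl fun z hz => by rw [hrepB z hz]
      _ = μ x + ∑ w ∈ B, μ w * ∑ z ∈ B, green Q w z * retKer Q B z x := by
          congr 1
          simp_rw [Finset.sum_mul, Finset.mul_sum, mul_assoc]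
          exact Finset.sum_comm
      _ = ∑ w ∈ B, μ w * ((if w = x then 1 else 0) +
            ∑ z ∈ B, green Q w z * retKer Q B z x) := by
          simp_rw [mul_add, mul_ite, mul_one, mul_zero]
          rw [Finset.sum_add_distrib, Finset.sum_ite_eq' B x μ, if_pos hx]
      _ = ∑ w ∈ B, μ w * green Q w x :=
          Finset.sum_congr rfl fun w hw => by rw [← green_eq Q B hw hx]
  refine ⟨?_, key2⟩
  intro μ₁ μ₂ h1fin h2fin hrep1 hrep2
  have hB12 : ∀ x ∈ B, μ₁ x = μ₂ x := by
    intro x hx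
    have e1 := key2 μ₁ h1fin hrep1 x hx
    have e2 := key2 μ₂ h2fin hrep2 x hx
    have hCfin : ∑ z ∈ B, ν z * retKer Q B z x ≠ ⊤ := by
      intro hC
      have : ν x = ⊤ := by rw [← e1, hC, add_top]
      exact (hνfin x).ne this
    exact (ENNReal.add_left_inj hCfin).mp (e1.trans e2.symm)
  funext x
  by_cases hx : x ∈ B
  · exact hB12 x hx
  · have hsum_eq : (∑' z, (if z ∈ B then μ₁ z * green Q z x else 0))
        = ∑' z, (if z ∈ B then μ₂ z * green Q z x else 0) := by
      refine tsum_congr fun z => ?_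
      by_cases hz : z ∈ B
      · simp [hz, hB12 z hz]
      · simp [hz]
    have e1 := hrep1 x
    have e2 := hrep2 x
    rw [if_neg hx] at e1 e2
    have hsfin : (∑' z, (if z ∈ B then μ₁ z * green Q z x else 0)) ≠ ⊤ := by
      intro hc
      have : ν x = ⊤ := by rw [e1, hc, add_top]
      exact (hνfin x).ne this
    have hd : μ₁ x / h x = μ₂ x / h x := by
      have heq := e1.symm.trans e2
      rw [← hsum_eq] at heq
      exact (ENNReal.add_left_inj hsfin).mp heq
    have := congrArg (· * h x) hd
    simpa [ENNReal.div_mul_cancel (hh0 x).ne' (hhfin x).ne] using this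
end

section
/- Let (B_n) be finite subsets of countable S with B_n ↑ S, Q nonnegative with finite Green's function G, and (μ̄_{B_n}) a consistent entrance family: μ̄_{B_n}(y) = 1_{B_n}(y) Σ_{x} μ̄_{B_{n+1}}(x) Σ_{m≥0} Σ over paths x = x_0,…,x_m = y with x_0,…,x_{m-1} ∉ B_n of Q(x_0,x_1)⋯Q(x_{m-1},x_m). Define ν_n = μ̄_{B_n} G restricted to B_n. Then the family is consistent: for x ∈ B_n, (μ̄_{B_{n+1}} G)(x) = (μ̄_{B_n} G)(x), so ν := lim_n ν_n is a well-defined measure on S. -/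
open scoped ENNReal

/-- The first-entrance kernel into `B`:
`E_B(x,y) = 1_B(y) Σ_{m≥0} Σ_{x_0=x,…,x_m=y, x_0,…,x_{m-1} ∉ B} Q(x_0,x_1)⋯Q(x_{m-1},x_m)`. -/
noncomputable def entKer {S : Type*} [DecidableEq S] (Q : S → S → ℝ≥0∞) (B : Finset S)
    (x y : S) : ℝ≥0∞ :=
  if y ∈ B then ∑' (m : ℕ), qpow (fun u v => if u ∈ B then 0 else Q u v) m x y else 0

/-!
Split a `Q`-path from `z` to `x ∈ B` at its first entrance time into `B`: the part before it is a
path of the kernel `Q` killed on `B` (this is `entKer`), the part after it is arbitrary. Summing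
over path lengths gives `G(z, x) = Σ_y E_B(z, y) G(y, x)` for `x ∈ B`. Integrating against
`μ̄_{B_{n+1}}` and using consistency `μ̄_{B_n} = μ̄_{B_{n+1}} E_{B_n}` yields the theorem.
-/

open Finset

lemma ENNReal.tsum_prod_eq_tsum_sum_antidiagonal (f : ℕ × ℕ → ℝ≥0∞) :
    ∑' p, f p = ∑' n, ∑ p ∈ antidiagonal n, f p := by
  rw [← HasAntidiagonal.sigmaAntidiagonalEquivProd.tsum_eq f, ENNReal.tsum_sigma']
  exact tsum_congr fun n => Finset.tsum_subtype (antidiagonal n) f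

lemma ENNReal.tsum_mul_tsum_mul_comm {α β : Type*} (μ : α → ℝ≥0∞) (K : α → β → ℝ≥0∞)
    (f : β → ℝ≥0∞) :
    ∑' a, μ a * ∑' b, K a b * f b = ∑' b, (∑' a, μ a * K a b) * f b := by
  simp_rw [← ENNReal.tsum_mul_left, ← ENNReal.tsum_mul_right, mul_assoc]
  exact ENNReal.tsum_comm

noncomputable section FirstEntrance

variable {S : Type*} [DecidableEq S] (Q : S → S → ℝ≥0∞) (B : Finset S)

def killOn : S → S → ℝ≥0∞ := fun u v => if u ∈ B then 0 else Q u v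

def entKerTime (m : ℕ) (z y : S) : ℝ≥0∞ := if y ∈ B then qpow (killOn Q B) m z y else 0

lemma entKer_eq_tsum_entKerTime (z y : S) : entKer Q B z y = ∑' m, entKerTime Q B m z y := by
  unfold entKer entKerTime killOn
  split_ifs <;> simp

lemma tsum_entKerTime_zero_mul (z : S) (f : S → ℝ≥0∞) :
    ∑' y, entKerTime Q B 0 z y * f y = if z ∈ B then f z else 0 := by
  rw [tsum_eq_single z fun y hy => by simp [entKerTime, qpow, Ne.symm hy]]
  split_ifs with hz <;> simp [entKerTime, qpow, hz]

variable {Q B}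

lemma entKerTime_succ_of_mem {z : S} (hz : z ∈ B) (m : ℕ) (y : S) :
    entKerTime Q B (m + 1) z y = 0 := by
  simp [entKerTime, qpow, killOn, hz]

lemma entKerTime_succ_of_notMem {z : S} (hz : z ∉ B) (m : ℕ) (y : S) :
    entKerTime Q B (m + 1) z y = ∑' w, Q z w * entKerTime Q B m w y := by
  by_cases hy : y ∈ B <;> simp [entKerTime, qpow, killOn, hz, hy]

lemma qpow_eq_sum_antidiagonal_entKerTime {x : S} (hx : x ∈ B) (n : ℕ) (z : S) :
    qpow Q n z x = ∑ p ∈ antidiagonal n, ∑' y, entKerTime Q B p.1 z y * qpow Q p.2 y x := by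
  induction n generalizing z with
  | zero =>
    rw [Nat.antidiagonal_zero, sum_singleton, tsum_entKerTime_zero_mul]
    split_ifs with hz
    · rfl
    · simp [qpow, (ne_of_mem_of_not_mem hx hz).symm]
  | succ n ih =>
    -- A path starting in `B` enters it at time `0`; otherwise its first step is a `Q`-step.
    rw [Nat.sum_antidiagonal_succ, tsum_entKerTime_zero_mul]
    by_cases hz : z ∈ B
    · simp [hz, entKerTime_succ_of_mem]
    · simp only [hz, if_false, zero_add, entKerTime_succ_of_notMem hz]
      calc qpow Q (n + 1) z x = ∑' w, Q z w * qpow Q n w x := rfl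
        _ = _ := by
          simp_rw [ih, Finset.mul_sum, ← ENNReal.tsum_mul_right, ← ENNReal.tsum_mul_left]
          rw [Summable.tsum_finsetSum fun _ _ => ENNReal.summable]
          refine sum_congr rfl fun p _ => ?_
          rw [ENNReal.tsum_comm]
          simp_rw [mul_assoc]

theorem tsum_entKer_mul_green {x : S} (hx : x ∈ B) (z : S) :
    ∑' y, entKer Q B z y * green Q y x = green Q z x := by
  calc ∑' y, entKer Q B z y * green Q y x
      = ∑' p : ℕ × ℕ, ∑' y, entKerTime Q B p.1 z y * qpow Q p.2 y x := by
        simp_rw [entKer_eq_tsum_entKerTime, green, ← ENNReal.tsum_mul_right,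
          ← ENNReal.tsum_mul_left]
        rw [ENNReal.tsum_comm, ENNReal.tsum_prod']
        exact tsum_congr fun m => ENNReal.tsum_comm
    _ = green Q z x := by
        simp_rw [ENNReal.tsum_prod_eq_tsum_sum_antidiagonal,
          ← qpow_eq_sum_antidiagonal_entKerTime hx]
        rfl

end FirstEntrance

theorem entranceFamily_potential_consistent_general {S : Type*} [DecidableEq S]
    (Q : S → S → ℝ≥0∞)
    (Bn : ℕ → Finset S)
    (μbar : ℕ → S → ℝ≥0∞)
    (hcons : ∀ n y, μbar n y = ∑' x, μbar (n + 1) x * entKer Q (Bn n) x y) :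
    ∀ n, ∀ x ∈ Bn n,
      ∑' z, μbar (n + 1) z * green Q z x = ∑' z, μbar n z * green Q z x := by
  intro n x hx
  calc ∑' z, μbar (n + 1) z * green Q z x
      = ∑' z, μbar (n + 1) z * ∑' y, entKer Q (Bn n) z y * green Q y x := by
        simp_rw [tsum_entKer_mul_green hx]
    _ = ∑' y, μbar n y * green Q y x := by
        rw [ENNReal.tsum_mul_tsum_mul_comm]
        simp_rw [← hcons]

/-- for a consistent entrance family `(μ̄_{B_n})` along `B_n ↑ S`, the
potentials are consistent: `(μ̄_{B_{n+1}} G)(x) = (μ̄_{B_n} G)(x)` for `x ∈ B_n`,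
so `ν = lim_n μ̄_{B_n} G` is well defined. -/
theorem entranceFamily_potential_consistent {S : Type*} [Countable S] [DecidableEq S]
    (Q : S → S → ℝ≥0∞) (hG : ∀ x y, green Q x y < ⊤)
    (Bn : ℕ → Finset S) (hmono : ∀ n, Bn n ⊆ Bn (n + 1)) (hcover : ∀ x : S, ∃ n, x ∈ Bn n)
    (μbar : ℕ → S → ℝ≥0∞)
    (hsupp : ∀ n, ∀ y ∉ Bn n, μbar n y = 0)
    (hfin : ∀ n, ∑' y, μbar n y < ⊤)
    (hcons : ∀ n y, μbar n y = ∑' x, μbar (n + 1) x * entKer Q (Bn n) x y) :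
    ∀ n, ∀ x ∈ Bn n,
      ∑' z, μbar (n + 1) z * green Q z x = ∑' z, μbar n z * green Q z x :=
  entranceFamily_potential_consistent_general Q Bn μbar hcons
end
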